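/- Let u, f, g, Ω be smooth real functions on ℝ² with f_y = f_{xx} + u·f, g_y = −g_{xx} − u·g, Ω_x = f·g, Ω_y = f_x·g − f·g_x, and f nowhere vanishing. Then g̃ := Ω/f satisfies g̃_y = −g̃_{xx} − ũ·g̃, where ũ := u + 2(f_x/f)_x. (The adjoint eigenfunction g̃ = f^{-1}D^{-1}(fg) of the T_1[f]-transformed system, used to form the composition T = T_2∘T_1 in Section 5.) -/

import Mathlib

noncomputable section

abbrev Pt2 : Type := ℝ × ℝ

/-- partial derivative in the first coordinate `x`. -/
def px (F : Pt2 → ℝ) : Pt2 → ℝ := fun p => deriv (fun s => F (s, p.2)) p.1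

/-- partial derivative in the second coordinate `y`. -/
def py (F : Pt2 → ℝ) : Pt2 → ℝ := fun p => deriv (fun s => F (p.1, s)) p.2

lemma sliceX {F : Pt2 → ℝ} (hF : ContDiff ℝ (⊤ : ℕ∞) F) (y : ℝ) :
    Differentiable ℝ (fun s : ℝ => F (s, y)) :=
  (hF.comp (contDiff_id.prodMk contDiff_const)).differentiable (by simp)

lemma sliceY {F : Pt2 → ℝ} (hF : ContDiff ℝ (⊤ : ℕ∞) F) (x : ℝ) :
    Differentiable ℝ (fun s : ℝ => F (x, s)) :=
  (hF.comp (contDiff_const.prodMk contDiff_id)).differentiable (by simp)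

lemma px_eq {F : Pt2 → ℝ} (hF : ContDiff ℝ (⊤ : ℕ∞) F) (p : Pt2) :
    px F p = fderiv ℝ F p (1, 0) := by
  have h1 : HasDerivAt (fun s : ℝ => ((s, p.2) : Pt2)) ((1 : ℝ), (0 : ℝ)) p.1 :=
    (hasDerivAt_id p.1).prodMk (hasDerivAt_const p.1 p.2)
  have h2 := ((hF.differentiable (by simp)) (p.1, p.2)).hasFDerivAt
  exact (h2.comp_hasDerivAt p.1 h1).deriv

lemma contDiff_px {F : Pt2 → ℝ} (hF : ContDiff ℝ (⊤ : ℕ∞) F) : ContDiff ℝ (⊤ : ℕ∞) (px F) := by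
  have h : px F = fun p => fderiv ℝ F p (1, 0) := funext (px_eq hF)
  rw [h]
  exact (hF.fderiv_right (by simp)).clm_apply contDiff_const

lemma px_mul {F G : Pt2 → ℝ} (hF : ContDiff ℝ (⊤ : ℕ∞) F) (hG : ContDiff ℝ (⊤ : ℕ∞) G) (p : Pt2) :
    px (fun q => F q * G q) p = px F p * G p + F p * px G p :=
  deriv_mul (sliceX hF p.2 p.1) (sliceX hG p.2 p.1)

lemma px_sub {F G : Pt2 → ℝ} (hF : ContDiff ℝ (⊤ : ℕ∞) F) (hG : ContDiff ℝ (⊤ : ℕ∞) G) (p : Pt2) :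
    px (fun q => F q - G q) p = px F p - px G p :=
  deriv_sub (sliceX hF p.2 p.1) (sliceX hG p.2 p.1)

lemma px_div {F G : Pt2 → ℝ} (hF : ContDiff ℝ (⊤ : ℕ∞) F) (hG : ContDiff ℝ (⊤ : ℕ∞) G)
    (hG0 : ∀ q, G q ≠ 0) (p : Pt2) :
    px (fun q => F q / G q) p = (px F p * G p - F p * px G p) / (G p) ^ 2 :=
  deriv_div (sliceX hF p.2 p.1) (sliceX hG p.2 p.1) (hG0 p)

lemma py_div {F G : Pt2 → ℝ} (hF : ContDiff ℝ (⊤ : ℕ∞) F) (hG : ContDiff ℝ (⊤ : ℕ∞) G)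
    (hG0 : ∀ q, G q ≠ 0) (p : Pt2) :
    py (fun q => F q / G q) p = (py F p * G p - F p * py G p) / (G p) ^ 2 :=
  deriv_div (sliceY hF p.1 p.2) (sliceY hG p.1 p.2) (hG0 p)

theorem kp_adjoint_transform_T1 (u f g Ω : Pt2 → ℝ)
    (hu : ContDiff ℝ (⊤ : ℕ∞) u) (hf : ContDiff ℝ (⊤ : ℕ∞) f) (hg : ContDiff ℝ (⊤ : ℕ∞) g)
    (hΩ : ContDiff ℝ (⊤ : ℕ∞) Ω)
    (hfeq : ∀ p : Pt2, py f p = px (px f) p + u p * f p)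
    (hgeq : ∀ p : Pt2, py g p = -(px (px g) p) - u p * g p)
    (hΩx : ∀ p : Pt2, px Ω p = f p * g p)
    (hΩy : ∀ p : Pt2, py Ω p = px f p * g p - f p * px g p)
    (hf0 : ∀ p : Pt2, f p ≠ 0) :
    ∀ p : Pt2,
      py (fun p' => Ω p' / f p') p
        = -(px (px (fun p' => Ω p' / f p')) p)
          - (u p + 2 * px (fun p' => px f p' / f p') p) * (Ω p / f p) := by
  intro p
  have hfx : ContDiff ℝ (⊤ : ℕ∞) (px f) := contDiff_px hf
  -- N and D : first x-derivative of Ω/f written as N/D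
  set N : Pt2 → ℝ := fun q => f q * g q * f q - Ω q * px f q with hN
  set D : Pt2 → ℝ := fun q => f q * f q with hD
  have hNc : ContDiff ℝ (⊤ : ℕ∞) N := ((hf.mul hg).mul hf).sub (hΩ.mul hfx)
  have hDc : ContDiff ℝ (⊤ : ℕ∞) D := hf.mul hf
  have hD0 : ∀ q, D q ≠ 0 := fun q => mul_ne_zero (hf0 q) (hf0 q)
  have hfun : (fun q => px (fun q' => Ω q' / f q') q) = fun q => N q / D q := by
    funext q
    rw [show px (fun q' => Ω q' / f q') q
        = (px Ω q * f q - Ω q * px f q) / (f q) ^ 2 from px_div hΩ hf hf0 q,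
      hΩx q, hN, hD]
    ring
  -- second derivative
  have h2 : px (px (fun p' => Ω p' / f p')) p
      = (px N p * D p - N p * px D p) / (D p) ^ 2 := by
    show px (fun q => px (fun q' => Ω q' / f q') q) p = _
    rw [hfun]
    exact px_div hNc hDc hD0 p
  have hpxN : px N p = (px f p * g p + f p * px g p) * f p
      + f p * g p * px f p - (f p * g p * px f p + Ω p * px (px f) p) := by
    rw [hN]
    rw [px_sub ((hf.mul hg).mul hf) (hΩ.mul hfx) p,
      px_mul (hf.mul hg) hf p, px_mul hf hg p, px_mul hΩ hfx p, hΩx p]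
  have hpxD : px D p = px f p * f p + f p * px f p := px_mul hf hf p
  have hA : px (fun p' => px f p' / f p') p
      = (px (px f) p * f p - px f p * px f p) / (f p) ^ 2 :=
    px_div hfx hf hf0 p
  have hL : py (fun p' => Ω p' / f p') p
      = (py Ω p * f p - Ω p * py f p) / (f p) ^ 2 := py_div hΩ hf hf0 p
  rw [hL, h2, hA, hpxN, hpxD, hΩy p, hfeq p]
  have hfp := hf0 p
  rw [hN, hD]
  field_simp
  ring
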